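/- arXiv:1409.5611 — 4 statements merged into one kernel-verified Lean document; each statement's English description precedes it below -/
import Mathlib

section
/- Let Ω be a bounded open convex subset of ℝⁿ with Hilbert distance d. If x, y ∈ Ω and z lies on the closed segment [x, y], then d(x,y) = d(x,z) + d(z,y). In particular, the intersection of any Euclidean straight line with Ω is a geodesic for the Hilbert metric. -/
/-- The predicate that `d` is the Hilbert distance of the bounded open convex set `Ω`:
`d x x = 0`, and for distinct `x y ∈ Ω` there are frontier points `x̄` (with `x`
strictly between `x̄` and `y`) and `ȳ` (with `y` strictly between `x` and `ȳ`) such that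
`d x y = log ((‖ȳ - x‖/‖ȳ - y‖) * (‖x̄ - y‖/‖x̄ - x‖))`. -/
def IsHilbertDist {n : ℕ} (Ω : Set (EuclideanSpace ℝ (Fin n)))
    (d : EuclideanSpace ℝ (Fin n) → EuclideanSpace ℝ (Fin n) → ℝ) : Prop :=
  (∀ x, d x x = 0) ∧
  ∀ x ∈ Ω, ∀ y ∈ Ω, x ≠ y →
    ∃ xb ∈ frontier Ω, ∃ yb ∈ frontier Ω,
      x ∈ openSegment ℝ xb y ∧ y ∈ openSegment ℝ x yb ∧
      d x y = Real.log ((‖yb - x‖ / ‖yb - y‖) * (‖xb - y‖ / ‖xb - x‖))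

/-- The `(n+1) × (n+1)` block matrix `[[A, b], [cᵀ, δ]]`. -/
noncomputable def projMat {n : ℕ} (A : Matrix (Fin n) (Fin n) ℝ)
    (b c : EuclideanSpace ℝ (Fin n)) (δ : ℝ) :
    Matrix (Fin n ⊕ Fin 1) (Fin n ⊕ Fin 1) ℝ :=
  Matrix.fromBlocks A (Matrix.replicateCol (Fin 1) b) (Matrix.replicateRow (Fin 1) c) (Matrix.of fun _ _ => δ)

/-- The fractional linear map `x ↦ (A·x + b) / (⟨c,x⟩ + δ)`. -/
noncomputable def fracLin {n : ℕ} (A : Matrix (Fin n) (Fin n) ℝ)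
    (b c : EuclideanSpace ℝ (Fin n)) (δ : ℝ)
    (x : EuclideanSpace ℝ (Fin n)) : EuclideanSpace ℝ (Fin n) :=
  ((∑ i, c i * x i) + δ)⁻¹ • ((WithLp.equiv 2 (Fin n → ℝ)).symm (A.mulVec x) + b)

/-- `f` is the restriction to `U` of a projective transformation of `ℝPⁿ`:
it has fractional linear form `x ↦ (A·x + b)/(⟨c,x⟩ + δ)` on `U`, with the block matrix
`[[A, b],[cᵀ, δ]]` invertible and the denominator nonvanishing on `U`. -/
def IsProjectiveRestriction {n : ℕ} (U : Set (EuclideanSpace ℝ (Fin n)))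
    (f : EuclideanSpace ℝ (Fin n) → EuclideanSpace ℝ (Fin n)) : Prop :=
  ∃ (A : Matrix (Fin n) (Fin n) ℝ) (b c : EuclideanSpace ℝ (Fin n)) (δ : ℝ),
    (projMat A b c δ).det ≠ 0 ∧
    ∀ x ∈ U, ((∑ i, c i * x i) + δ ≠ 0) ∧ f x = fracLin A b c δ x

/-!
Parametrize the line through `x` and `y` by `t ↦ lineMap x y t`. Since `Ω` is open and convex, on
each side of a point of `Ω` this line meets the frontier of `Ω` at most once. Hence the chords
through any two points of the line inside `Ω` all have the same endpoints `lineMap x y a` and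
`lineMap x y b`, and the Hilbert distance between `lineMap x y p` and `lineMap x y q` is the log
cross ratio `intervalHilbertDist a b p q`, which is additive because the factors involving an
intermediate point cancel.
-/

open AffineMap Set

section LineMap

variable {E : Type*} [AddCommGroup E] [Module ℝ E]

lemma exists_one_lt_lineMap_lineMap_eq {x y w : E} {p q : ℝ}
    (h : lineMap x y q ∈ openSegment ℝ (lineMap x y p) w) :
    ∃ s : ℝ, 1 < s ∧ lineMap x y (lineMap p q s) = w := by
  rw [openSegment_eq_image_lineMap] at h
  obtain ⟨u, ⟨hu0, hu1⟩, hu⟩ := h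
  refine ⟨u⁻¹, (one_lt_inv₀ hu0).2 hu1, ?_⟩
  rw [(lineMap x y).apply_lineMap, ← hu, lineMap_lineMap_right, inv_mul_cancel₀ hu0.ne',
    lineMap_apply_one]

variable [TopologicalSpace E] [IsTopologicalAddGroup E] [ContinuousSMul ℝ E]
  {Ω : Set E} {x y : E}

lemma lineMap_mem_of_mem_openSegment (hO : IsOpen Ω) (hC : Convex ℝ Ω) {s t u : ℝ}
    (ht : lineMap x y t ∈ Ω) (hu : lineMap x y u ∈ closure Ω) (hs : s ∈ openSegment ℝ t u) :
    lineMap x y s ∈ Ω := by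
  rw [← hO.interior_eq] at ht ⊢
  refine hC.openSegment_interior_closure_subset_interior ht hu ?_
  rw [← image_openSegment ℝ (lineMap x y)]
  exact mem_image_of_mem _ hs

lemma lineMap_notMem_frontier_of_mem_openSegment (hO : IsOpen Ω) (hC : Convex ℝ Ω) {s t u : ℝ}
    (ht : lineMap x y t ∈ Ω) (hu : lineMap x y u ∈ frontier Ω) (hs : s ∈ openSegment ℝ t u) :
    lineMap x y s ∉ frontier Ω := fun hs' =>
  (hO.frontier_eq ▸ hs').2 (lineMap_mem_of_mem_openSegment hO hC ht (frontier_subset_closure hu) hs)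

lemma eq_of_lineMap_mem_frontier_of_lt (hO : IsOpen Ω) (hC : Convex ℝ Ω) {t s₁ s₂ : ℝ}
    (ht : lineMap x y t ∈ Ω) (h₁ : lineMap x y s₁ ∈ frontier Ω) (h₂ : lineMap x y s₂ ∈ frontier Ω)
    (hts₁ : t < s₁) (hts₂ : t < s₂) : s₁ = s₂ := by
  rcases lt_trichotomy s₁ s₂ with h | h | h
  · refine absurd h₁ (lineMap_notMem_frontier_of_mem_openSegment hO hC ht h₂ ?_)
    rw [openSegment_eq_Ioo hts₂]; exact ⟨hts₁, h⟩
  · exact h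
  · refine absurd h₂ (lineMap_notMem_frontier_of_mem_openSegment hO hC ht h₁ ?_)
    rw [openSegment_eq_Ioo hts₁]; exact ⟨hts₂, h⟩

lemma eq_of_lineMap_mem_frontier_of_gt (hO : IsOpen Ω) (hC : Convex ℝ Ω) {t s₁ s₂ : ℝ}
    (ht : lineMap x y t ∈ Ω) (h₁ : lineMap x y s₁ ∈ frontier Ω) (h₂ : lineMap x y s₂ ∈ frontier Ω)
    (hts₁ : s₁ < t) (hts₂ : s₂ < t) : s₁ = s₂ := by
  rw [← lineMap_apply_one_sub] at ht h₁ h₂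
  have := eq_of_lineMap_mem_frontier_of_lt hO hC ht h₁ h₂ (by linarith) (by linarith)
  linarith

end LineMap

lemma norm_lineMap_sub_lineMap {E : Type*} [NormedAddCommGroup E] [NormedSpace ℝ E]
    (x y : E) (u v : ℝ) : ‖lineMap x y u - lineMap x y v‖ = |u - v| * ‖x - y‖ := by
  rw [← dist_eq_norm, dist_lineMap_lineMap, Real.dist_eq, dist_eq_norm]

noncomputable def intervalHilbertDist (a b p q : ℝ) : ℝ :=
  Real.log ((b - p) / (b - q) * ((q - a) / (p - a)))

lemma intervalHilbertDist_self {a b p : ℝ} (ha : a < p) (hb : p < b) :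
    intervalHilbertDist a b p p = 0 := by
  rw [intervalHilbertDist, div_self (by linarith), div_self (by linarith), one_mul, Real.log_one]

lemma intervalHilbertDist_add {a b p q r : ℝ} (hap : a < p) (hpr : p ≤ r) (hrq : r ≤ q)
    (hqb : q < b) :
    intervalHilbertDist a b p q = intervalHilbertDist a b p r + intervalHilbertDist a b r q := by
  have hbp : 0 < b - p := by linarith
  have hbr : 0 < b - r := by linarith
  have hbq : 0 < b - q := by linarith
  have hpa : 0 < p - a := by linarith
  have hra : 0 < r - a := by linarith
  have hqa : 0 < q - a := by linarith
  unfold intervalHilbertDist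
  rw [← Real.log_mul (by positivity) (by positivity)]
  congr 1
  field_simp

section HilbertDist

variable {n : ℕ} {Ω : Set (EuclideanSpace ℝ (Fin n))}
  {d : EuclideanSpace ℝ (Fin n) → EuclideanSpace ℝ (Fin n) → ℝ} {x y : EuclideanSpace ℝ (Fin n)}
  {p q : ℝ}

theorem IsHilbertDist.exists_lineMap_chord (hd : IsHilbertDist Ω d) (hxy : x ≠ y)
    (hp : lineMap x y p ∈ Ω) (hq : lineMap x y q ∈ Ω) (hpq : p < q) :
    ∃ a b, a < p ∧ q < b ∧ lineMap x y a ∈ frontier Ω ∧ lineMap x y b ∈ frontier Ω ∧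
      d (lineMap x y p) (lineMap x y q) = intervalHilbertDist a b p q := by
  have hPQ : lineMap x y p ≠ lineMap x y q := (lineMap_injective ℝ hxy).ne hpq.ne
  obtain ⟨xb, hxb, yb, hyb, hPxb, hQyb, hdist⟩ := hd.2 _ hp _ hq hPQ
  rw [openSegment_symm] at hPxb
  obtain ⟨s, hs, rfl⟩ := exists_one_lt_lineMap_lineMap_eq hQyb
  obtain ⟨s', hs', rfl⟩ := exists_one_lt_lineMap_lineMap_eq hPxb
  have hap : lineMap q p s' < p := by rw [lineMap_apply_ring']; nlinarith
  have hqb : q < lineMap p q s := by rw [lineMap_apply_ring']; nlinarith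
  generalize lineMap q p s' = a at hap hxb hdist
  generalize lineMap p q s = b at hqb hyb hdist
  refine ⟨a, b, hap, hqb, hxb, hyb, ?_⟩
  have hxy' : ‖x - y‖ ≠ 0 := norm_ne_zero_iff.2 (sub_ne_zero.2 hxy)
  rw [hdist, intervalHilbertDist]
  simp only [norm_lineMap_sub_lineMap, mul_div_mul_right _ _ hxy']
  rw [abs_sub_comm a q, abs_sub_comm a p, abs_of_pos (by linarith), abs_of_pos (by linarith),
    abs_of_pos (by linarith), abs_of_pos (by linarith)]

theorem IsHilbertDist.eq_intervalHilbertDist (hd : IsHilbertDist Ω d) (hO : IsOpen Ω)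
    (hC : Convex ℝ Ω) (hxy : x ≠ y) {a b : ℝ} (ha : lineMap x y a ∈ frontier Ω)
    (hb : lineMap x y b ∈ frontier Ω) (hp : lineMap x y p ∈ Ω) (hq : lineMap x y q ∈ Ω)
    (hap : a < p) (hpq : p ≤ q) (hqb : q < b) :
    d (lineMap x y p) (lineMap x y q) = intervalHilbertDist a b p q := by
  rcases hpq.eq_or_lt with rfl | hpq
  · rw [hd.1, intervalHilbertDist_self hap hqb]
  obtain ⟨a', b', ha'p, hqb', ha', hb', hdist⟩ := hd.exists_lineMap_chord hxy hp hq hpq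
  rwa [eq_of_lineMap_mem_frontier_of_gt hO hC hp ha' ha ha'p hap,
    eq_of_lineMap_mem_frontier_of_lt hO hC hq hb' hb hqb' hqb] at hdist

end HilbertDist

theorem hilbert_dist_additive_on_segments_general {n : ℕ} (Ω : Set (EuclideanSpace ℝ (Fin n)))
    (hO : IsOpen Ω) (hC : Convex ℝ Ω)
    (d : EuclideanSpace ℝ (Fin n) → EuclideanSpace ℝ (Fin n) → ℝ)
    (hd : IsHilbertDist Ω d)
    (x y z : EuclideanSpace ℝ (Fin n)) (hx : x ∈ Ω) (hy : y ∈ Ω)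
    (hz : z ∈ segment ℝ x y) :
    d x y = d x z + d z y := by
  rcases eq_or_ne x y with rfl | hxy
  · rw [segment_same, mem_singleton_iff] at hz
    rw [hz, hd.1, add_zero]
  have hzΩ : z ∈ Ω := hC.segment_subset hx hy hz
  rw [segment_eq_image_lineMap] at hz
  obtain ⟨t, ⟨ht0, ht1⟩, rfl⟩ := hz
  have hx' : lineMap x y (0 : ℝ) ∈ Ω := by rwa [lineMap_apply_zero]
  have hy' : lineMap x y (1 : ℝ) ∈ Ω := by rwa [lineMap_apply_one]
  obtain ⟨a, b, ha, hb, hfa, hfb, -⟩ := hd.exists_lineMap_chord hxy hx' hy' one_pos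
  have key := fun {p q : ℝ} => hd.eq_intervalHilbertDist (p := p) (q := q) hO hC hxy hfa hfb
  calc d x y = d (lineMap x y (0 : ℝ)) (lineMap x y (1 : ℝ)) := by
        rw [lineMap_apply_zero, lineMap_apply_one]
    _ = intervalHilbertDist a b 0 1 := key hx' hy' ha zero_le_one hb
    _ = intervalHilbertDist a b 0 t + intervalHilbertDist a b t 1 :=
        intervalHilbertDist_add ha ht0 ht1 hb
    _ = d x (lineMap x y t) + d (lineMap x y t) y := by
        rw [← key hx' hzΩ ha ht0 (by linarith), ← key hzΩ hy' (by linarith) ht1 hb,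
          lineMap_apply_zero, lineMap_apply_one]

/-- points of the segment `[x,y]` lie on a geodesic: the Hilbert
distance is additive along straight segments. -/
theorem hilbert_dist_additive_on_segments {n : ℕ} (Ω : Set (EuclideanSpace ℝ (Fin n)))
    (hne : Ω.Nonempty) (hO : IsOpen Ω) (hB : Bornology.IsBounded Ω) (hC : Convex ℝ Ω)
    (d : EuclideanSpace ℝ (Fin n) → EuclideanSpace ℝ (Fin n) → ℝ)
    (hd : IsHilbertDist Ω d)
    (x y z : EuclideanSpace ℝ (Fin n)) (hx : x ∈ Ω) (hy : y ∈ Ω)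
    (hz : z ∈ segment ℝ x y) :
    d x y = d x z + d z y :=
  hilbert_dist_additive_on_segments_general Ω hO hC d hd x y z hx hy hz
end

section
/- Let Ω be a bounded open convex subset of ℝⁿ with Hilbert distance d. Let p and q be two distinct points of the frontier of Ω such that the open segment (p,q) is contained in Ω, and suppose that at least one of p, q is an extreme point of the closure of Ω. Then for all x, y in the open segment (p,q) and all z ∈ Ω, one has d(x,y) = d(x,z) + d(z,y) if and only if z lies on the closed segment [x,y]. -/
/-!
Along a chord `(p, q)` of `Ω` the Hilbert distance is `|logit v - logit u|` in the affine
parameter of the chord, so there it is additive exactly on segments.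

Off the line `pq`, split `d x y = F(y, x) + F(x, y)` into Funk terms `F(x, y) = log ((1 + t) / t)`,
where the ray from `x` through `y` leaves `Ω` at `ȳ = y + t • (y - x)`. If the rays `x → z` and
`z → y` leave `Ω` at `b₁ = z + t₁ • (z - x)` and `b₂ = y + t₂ • (y - z)`, Menelaus' theorem puts
the point where `(b₁, b₂)` crosses the ray `x → y` at parameter `t₁ t₂ / (1 + t₁ + t₂)`. That point
lies in `closure Ω`, hence not beyond `ȳ`: this is the Funk triangle inequality
`F(x, y) ≤ F(x, z) + F(z, y)`. If `d x y = d x z + d z y`, both Funk inequalities are equalities,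
so `ȳ` lies in the open segment `(b₁, b₂)` of `closure Ω`, and likewise for `x̄`. If `ȳ` is an
extreme point then `b₁ = ȳ`, which puts `z` on the line `xy`.
-/

open AffineMap Set

/-- `F(x, y) = log (‖ȳ - x‖ / ‖ȳ - y‖)` when `ȳ = y + t • (y - x)`. -/
noncomputable def funkTerm (t : ℝ) : ℝ := Real.log ((1 + t) / t)

noncomputable def logit (t : ℝ) : ℝ := Real.log t - Real.log (1 - t)

lemma funkTerm_pos {t : ℝ} (ht : 0 < t) : 0 < funkTerm t :=
  Real.log_pos ((one_lt_div ht).2 (by linarith))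

lemma funkTerm_strictAntiOn : StrictAntiOn funkTerm (Ioi 0) := by
  intro a (ha : 0 < a) b (hb : 0 < b) hab
  exact Real.log_lt_log (by positivity) ((div_lt_div_iff₀ hb ha).2 (by nlinarith))

lemma funkTerm_add {t₁ t₂ : ℝ} (ht₁ : 0 < t₁) (ht₂ : 0 < t₂) :
    funkTerm t₁ + funkTerm t₂ = funkTerm (t₁ * t₂ / (1 + t₁ + t₂)) := by
  rw [funkTerm, funkTerm, funkTerm, ← Real.log_mul (by positivity) (by positivity)]
  congr 1
  field_simp
  ring

lemma logit_strictMonoOn : StrictMonoOn logit (Ioo 0 1) := by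
  rintro a ⟨ha, -⟩ b ⟨-, hb⟩ hab
  have h₁ := Real.log_lt_log ha hab
  have h₂ := Real.log_lt_log (by linarith) (by linarith : 1 - b < 1 - a)
  rw [logit, logit]
  linarith

lemma logit_one_sub (t : ℝ) : logit (1 - t) = -logit t := by
  rw [logit, logit, sub_sub_cancel]
  ring

lemma StrictMonoOn.wbtw_iff {f : ℝ → ℝ} {s : Set ℝ} (hf : StrictMonoOn f s) {a b c : ℝ}
    (ha : a ∈ s) (hb : b ∈ s) (hc : c ∈ s) : Wbtw ℝ (f a) (f b) (f c) ↔ Wbtw ℝ a b c := by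
  simp only [← mem_segment_iff_wbtw, segment_eq_uIcc, mem_uIcc, hf.le_iff_le ha hb,
    hf.le_iff_le hb hc, hf.le_iff_le hc hb, hf.le_iff_le hb ha]

section Module

variable {V : Type*} [AddCommGroup V] [Module ℝ V]

/-- Menelaus' theorem in the triangle `x z y`. -/
lemma add_smul_sub_mem_openSegment (x y z : V) {t₁ t₂ : ℝ} (ht₁ : 0 ≤ t₁) (ht₂ : 0 < t₂) :
    y + (t₁ * t₂ / (1 + t₁ + t₂)) • (y - x) ∈
      openSegment ℝ (z + t₁ • (z - x)) (y + t₂ • (y - z)) := by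
  have hD : 0 < 1 + t₁ + t₂ := by linarith
  refine ⟨t₂ / (1 + t₁ + t₂), (1 + t₁) / (1 + t₁ + t₂), by positivity, by positivity,
    by field_simp; ring, ?_⟩
  match_scalars <;> field_simp <;> ring

lemma mem_affineSpan_pair_of_mem_extremePoints {K : Set V} {x y z : V} {t₁ t₂ : ℝ}
    (ht₁ : 0 ≤ t₁) (ht₂ : 0 < t₂) (hb₁ : z + t₁ • (z - x) ∈ K) (hb₂ : y + t₂ • (y - z) ∈ K)
    (he : y + (t₁ * t₂ / (1 + t₁ + t₂)) • (y - x) ∈ K.extremePoints ℝ) :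
    z ∈ line[ℝ, x, y] := by
  set τ := t₁ * t₂ / (1 + t₁ + t₂)
  have hb₁e : z + t₁ • (z - x) = y + τ • (y - x) :=
    he.2 hb₁ hb₂ (add_smul_sub_mem_openSegment x y z ht₁ ht₂)
  have h₁ : (1 + t₁) ≠ 0 := by positivity
  refine mem_affineSpan_pair_iff_exists_lineMap_eq.2 ⟨(1 + τ) / (1 + t₁), ?_⟩
  apply smul_right_injective V h₁
  simp only [lineMap_apply_module', smul_add, smul_smul, mul_div_cancel₀ _ h₁]
  linear_combination (norm := module) -hb₁e

lemma exists_pos_eq_add_smul_sub_of_mem_openSegment {x y w : V} (h : x ∈ openSegment ℝ w y) :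
    ∃ s : ℝ, 0 < s ∧ w = x + s • (x - y) := by
  obtain ⟨a, b, ha, hb, hab, rfl⟩ := h
  refine ⟨b / a, by positivity, ?_⟩
  obtain rfl : b = 1 - a := by linarith
  match_scalars <;> field_simp <;> ring

lemma lineMap_add_smul_sub (p q : V) (u v s : ℝ) :
    lineMap p q u + s • (lineMap p q u - lineMap p q v) = lineMap p q (u + s * (u - v)) := by
  simp only [lineMap_apply_module']
  module

lemma openSegment_subset_affineSpan_pair (p q : V) : openSegment ℝ p q ⊆ line[ℝ, p, q] := by
  rw [openSegment_eq_image_lineMap]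
  rintro _ ⟨c, -, rfl⟩
  exact lineMap_mem_affineSpan_pair c p q

end Module

variable {E : Type*} [NormedAddCommGroup E] [NormedSpace ℝ E]

lemma Convex.le_of_add_smul_mem_closure {Ω : Set E} (hC : Convex ℝ Ω) (hO : IsOpen Ω)
    {w v : E} {a b : ℝ} (hw : w ∈ Ω) (hb : 0 < b) (hwb : w + b • v ∉ Ω)
    (hwa : w + a • v ∈ closure Ω) : a ≤ b := by
  by_contra! hab
  have hsub := hC.openSegment_interior_closure_subset_interior (hO.interior_eq ▸ hw) hwa
  rw [hO.interior_eq] at hsub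
  have ha : 0 < a := hb.trans hab
  refine hwb (hsub ⟨1 - b / a, b / a, by rw [sub_pos, div_lt_one ha]; exact hab,
    by positivity, by ring, ?_⟩)
  rw [smul_add, smul_smul, div_mul_cancel₀ _ ha.ne']
  module

lemma Convex.menelaus_le {Ω : Set E} (hC : Convex ℝ Ω) (hO : IsOpen Ω) {x y z : E}
    (hy : y ∈ Ω) {t₀ t₁ t₂ : ℝ} (ht₀ : 0 < t₀) (ht₁ : 0 ≤ t₁) (ht₂ : 0 < t₂)
    (he : y + t₀ • (y - x) ∉ Ω) (hb₁ : z + t₁ • (z - x) ∈ closure Ω)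
    (hb₂ : y + t₂ • (y - z) ∈ closure Ω) : t₁ * t₂ / (1 + t₁ + t₂) ≤ t₀ :=
  hC.le_of_add_smul_mem_closure hO hy ht₀ he
    (hC.closure.openSegment_subset hb₁ hb₂ (add_smul_sub_mem_openSegment x y z ht₁ ht₂))

lemma norm_add_smul_sub_div_norm {x y : E} (hxy : x ≠ y) {s : ℝ} (hs : 0 < s) :
    ‖x + s • (x - y) - y‖ / ‖x + s • (x - y) - x‖ = (1 + s) / s := by
  have hn : ‖x - y‖ ≠ 0 := norm_ne_zero_iff.2 (sub_ne_zero.2 hxy)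
  rw [show x + s • (x - y) - y = (1 + s) • (x - y) by module,
    show x + s • (x - y) - x = s • (x - y) by module, norm_smul, norm_smul,
    Real.norm_of_nonneg (by positivity), Real.norm_of_nonneg hs.le, mul_div_mul_right _ _ hn]

structure IsChord (Ω : Set E) (p q : E) : Prop where
  left_notMem : p ∉ Ω
  right_notMem : q ∉ Ω
  openSegment_subset : openSegment ℝ p q ⊆ Ω

namespace IsChord

variable {Ω : Set E} {p q : E}

lemma symm (h : IsChord Ω p q) : IsChord Ω q p :=
  ⟨h.right_notMem, h.left_notMem, openSegment_symm ℝ p q ▸ h.openSegment_subset⟩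

lemma ne (h : IsChord Ω p q) : p ≠ q := by
  rintro rfl
  exact h.left_notMem (h.openSegment_subset (by simp [openSegment_same]))

lemma lineMap_mem (h : IsChord Ω p q) {c : ℝ} (hc : c ∈ Ioo 0 1) : lineMap p q c ∈ Ω :=
  h.openSegment_subset (openSegment_eq_image_lineMap ℝ p q ▸ mem_image_of_mem _ hc)

lemma le_one_of_lineMap_mem_closure (h : IsChord Ω p q) (hO : IsOpen Ω) (hC : Convex ℝ Ω)
    {c : ℝ} (hc : lineMap p q c ∈ closure Ω) : c ≤ 1 := by
  have key := hC.le_of_add_smul_mem_closure hO (v := q - p) (a := c - 1 / 2)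
    (h.lineMap_mem (c := 1 / 2) (by norm_num)) (by norm_num : (0 : ℝ) < 1 / 2)
    (by rw [show lineMap p q (1 / 2 : ℝ) + (1 / 2 : ℝ) • (q - p) = q by
          rw [lineMap_apply_module']; module]
        exact h.right_notMem)
    (by convert hc using 1; rw [lineMap_apply_module', lineMap_apply_module']; module)
  linarith

lemma mem_Icc_of_lineMap_mem_closure (h : IsChord Ω p q) (hO : IsOpen Ω) (hC : Convex ℝ Ω)
    {c : ℝ} (hc : lineMap p q c ∈ closure Ω) : c ∈ Icc 0 1 := by
  have h₀ := h.symm.le_one_of_lineMap_mem_closure hO hC (c := 1 - c)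
    (by rwa [lineMap_apply_one_sub])
  exact ⟨by linarith, h.le_one_of_lineMap_mem_closure hO hC hc⟩

lemma lineMap_mem_iff (h : IsChord Ω p q) (hO : IsOpen Ω) (hC : Convex ℝ Ω) {c : ℝ} :
    lineMap p q c ∈ Ω ↔ c ∈ Ioo 0 1 := by
  refine ⟨fun hc => ?_, h.lineMap_mem⟩
  obtain ⟨h₀, h₁⟩ := h.mem_Icc_of_lineMap_mem_closure hO hC (subset_closure hc)
  refine ⟨h₀.lt_of_ne ?_, h₁.lt_of_ne ?_⟩ <;> rintro rfl
  · exact h.left_notMem (by simpa using hc)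
  · exact h.right_notMem (by simpa using hc)

lemma eq_zero_or_eq_one_of_lineMap_mem_frontier (h : IsChord Ω p q) (hO : IsOpen Ω)
    (hC : Convex ℝ Ω) {c : ℝ} (hc : lineMap p q c ∈ frontier Ω) : c = 0 ∨ c = 1 := by
  rw [hO.frontier_eq] at hc
  obtain ⟨h₀, h₁⟩ := h.mem_Icc_of_lineMap_mem_closure hO hC hc.1
  by_contra! hne
  exact hc.2 (h.lineMap_mem ⟨h₀.lt_of_ne hne.1.symm, h₁.lt_of_ne hne.2⟩)

lemma mem_openSegment_of_mem_affineSpan (h : IsChord Ω p q) (hO : IsOpen Ω) (hC : Convex ℝ Ω)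
    {w : E} (hw : w ∈ line[ℝ, p, q]) (hwΩ : w ∈ Ω) : w ∈ openSegment ℝ p q := by
  obtain ⟨c, rfl⟩ := mem_affineSpan_pair_iff_exists_lineMap_eq.1 hw
  rw [openSegment_eq_image_lineMap]
  exact mem_image_of_mem _ ((h.lineMap_mem_iff hO hC).1 hwΩ)

lemma eq_or_eq_of_mem_frontier (h : IsChord Ω p q) (hO : IsOpen Ω) (hC : Convex ℝ Ω)
    {w : E} (hw : w ∈ line[ℝ, p, q]) (hwf : w ∈ frontier Ω) : w = p ∨ w = q := by
  obtain ⟨c, rfl⟩ := mem_affineSpan_pair_iff_exists_lineMap_eq.1 hw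
  rcases h.eq_zero_or_eq_one_of_lineMap_mem_frontier hO hC hwf with rfl | rfl <;> simp

lemma pair_eq (h : IsChord Ω p q) (hO : IsOpen Ω) (hC : Convex ℝ Ω) {x y : E}
    (hx : x ∈ openSegment ℝ p q) (hy : y ∈ openSegment ℝ p q) {s t : ℝ} (hs : 0 < s)
    (ht : 0 < t) (hxb : x + s • (x - y) ∈ frontier Ω) (hyb : y + t • (y - x) ∈ frontier Ω) :
    ({x + s • (x - y), y + t • (y - x)} : Set E) = {p, q} := by
  have hxy : x ≠ y := by
    rintro rfl
    rw [sub_self, smul_zero, add_zero, hO.frontier_eq] at hxb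
    exact hxb.2 (h.openSegment_subset hx)
  have hne : x + s • (x - y) ≠ y + t • (y - x) := by
    intro he
    have : (1 + s + t) • (x - y) = 0 := by linear_combination (norm := module) he
    exact hxy (sub_eq_zero.1 ((smul_eq_zero.1 this).resolve_left (by positivity)))
  have hline : ∀ r : ℝ, ∀ u v : E, u ∈ openSegment ℝ p q → v ∈ openSegment ℝ p q →
      u + r • (u - v) ∈ line[ℝ, p, q] := fun r u v hu hv => by
    simpa [add_comm] using (line[ℝ, p, q]).smul_vsub_vadd_mem r
      (openSegment_subset_affineSpan_pair p q hu) (openSegment_subset_affineSpan_pair p q hv)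
      (openSegment_subset_affineSpan_pair p q hu)
  rcases h.eq_or_eq_of_mem_frontier hO hC (hline s x y hx hy) hxb with h₁ | h₁ <;>
  rcases h.eq_or_eq_of_mem_frontier hO hC (hline t y x hy hx) hyb with h₂ | h₂ <;>
  rw [h₁, h₂] at hne ⊢ <;> first | rfl | exact pair_comm q p | exact absurd rfl hne

end IsChord

namespace IsHilbertDist

variable {n : ℕ} {Ω : Set (EuclideanSpace ℝ (Fin n))}
  {d : EuclideanSpace ℝ (Fin n) → EuclideanSpace ℝ (Fin n) → ℝ}

lemma exists_exit (hd : IsHilbertDist Ω d) {x y : EuclideanSpace ℝ (Fin n)} (hx : x ∈ Ω)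
    (hy : y ∈ Ω) (hxy : x ≠ y) :
    ∃ s t : ℝ, 0 < s ∧ 0 < t ∧ x + s • (x - y) ∈ frontier Ω ∧ y + t • (y - x) ∈ frontier Ω ∧
      d x y = funkTerm s + funkTerm t := by
  obtain ⟨xb, hxb, yb, hyb, hxm, hym, hdxy⟩ := hd.2 x hx y hy hxy
  obtain ⟨s, hs, rfl⟩ := exists_pos_eq_add_smul_sub_of_mem_openSegment hxm
  obtain ⟨t, ht, rfl⟩ :=
    exists_pos_eq_add_smul_sub_of_mem_openSegment (openSegment_symm ℝ x yb ▸ hym)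
  refine ⟨s, t, hs, ht, hxb, hyb, ?_⟩
  rw [hdxy, norm_add_smul_sub_div_norm hxy.symm ht, norm_add_smul_sub_div_norm hxy hs,
    Real.log_mul (by positivity) (by positivity), funkTerm, funkTerm, add_comm]

lemma pos (hd : IsHilbertDist Ω d) {x y : EuclideanSpace ℝ (Fin n)} (hx : x ∈ Ω) (hy : y ∈ Ω)
    (hxy : x ≠ y) : 0 < d x y := by
  obtain ⟨s, t, hs, ht, -, -, h⟩ := hd.exists_exit hx hy hxy
  rw [h]
  exact add_pos (funkTerm_pos hs) (funkTerm_pos ht)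

lemma lineMap_eq_logit_sub (hd : IsHilbertDist Ω d) (hO : IsOpen Ω) (hC : Convex ℝ Ω)
    {p q : EuclideanSpace ℝ (Fin n)} (h : IsChord Ω p q) {u v : ℝ} (hu : 0 < u) (hv : v < 1)
    (huv : u < v) : d (lineMap p q u) (lineMap p q v) = logit v - logit u := by
  obtain ⟨s, t, hs, ht, hxb, hyb, hdist⟩ := hd.exists_exit (h.lineMap_mem ⟨hu, huv.trans hv⟩)
    (h.lineMap_mem ⟨hu.trans huv, hv⟩) ((lineMap_injective ℝ h.ne).ne huv.ne)
  rw [lineMap_add_smul_sub] at hxb hyb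
  have hs₀ : u + s * (u - v) = 0 :=
    (h.eq_zero_or_eq_one_of_lineMap_mem_frontier hO hC hxb).resolve_right fun _ => by nlinarith
  have ht₁ : v + t * (v - u) = 1 :=
    (h.eq_zero_or_eq_one_of_lineMap_mem_frontier hO hC hyb).resolve_left fun _ => by nlinarith
  have hfs : (1 + s) / s = v / u := by rw [div_eq_div_iff hs.ne' hu.ne']; linarith
  have hft : (1 + t) / t = (1 - u) / (1 - v) := by
    rw [div_eq_div_iff ht.ne' (by linarith)]; linarith
  rw [hdist, funkTerm, funkTerm, hfs, hft, Real.log_div (by linarith) hu.ne',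
    Real.log_div (by linarith) (by linarith), logit, logit]
  ring

lemma lineMap_eq_dist_logit (hd : IsHilbertDist Ω d) (hO : IsOpen Ω) (hC : Convex ℝ Ω)
    {p q : EuclideanSpace ℝ (Fin n)} (h : IsChord Ω p q) {u v : ℝ} (hu : u ∈ Ioo 0 1)
    (hv : v ∈ Ioo 0 1) : d (lineMap p q u) (lineMap p q v) = dist (logit u) (logit v) := by
  rw [Real.dist_eq]
  rcases lt_trichotomy u v with huv | rfl | huv
  · rw [hd.lineMap_eq_logit_sub hO hC h hu.1 hv.2 huv, abs_sub_comm,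
      abs_of_pos (sub_pos.2 (logit_strictMonoOn hu hv huv))]
  · rw [hd.1, sub_self, abs_zero]
  · have := hd.lineMap_eq_logit_sub hO hC h.symm (u := 1 - u) (v := 1 - v) (by linarith [hu.2])
      (by linarith [hv.1]) (by linarith)
    rw [lineMap_apply_one_sub, lineMap_apply_one_sub, logit_one_sub, logit_one_sub] at this
    rw [this, abs_of_pos (sub_pos.2 (logit_strictMonoOn hv hu huv))]
    ring

lemma eq_add_iff_mem_segment_of_isChord (hd : IsHilbertDist Ω d) (hO : IsOpen Ω)
    (hC : Convex ℝ Ω) {p q : EuclideanSpace ℝ (Fin n)} (h : IsChord Ω p q)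
    {x y z : EuclideanSpace ℝ (Fin n)} (hx : x ∈ openSegment ℝ p q)
    (hy : y ∈ openSegment ℝ p q) (hz : z ∈ openSegment ℝ p q) :
    d x y = d x z + d z y ↔ z ∈ segment ℝ x y := by
  rw [openSegment_eq_image_lineMap] at hx hy hz
  obtain ⟨a, ha, rfl⟩ := hx
  obtain ⟨b, hb, rfl⟩ := hy
  obtain ⟨c, hc, rfl⟩ := hz
  rw [hd.lineMap_eq_dist_logit hO hC h ha hb, hd.lineMap_eq_dist_logit hO hC h ha hc,
    hd.lineMap_eq_dist_logit hO hC h hc hb, eq_comm, dist_add_dist_eq_iff,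
    logit_strictMonoOn.wbtw_iff ha hc hb, mem_segment_iff_wbtw,
    (lineMap_injective ℝ h.ne).wbtw_map_iff]

lemma lt_add_of_notMem_affineSpan (hd : IsHilbertDist Ω d) (hO : IsOpen Ω) (hC : Convex ℝ Ω)
    {x y z : EuclideanSpace ℝ (Fin n)} (hx : x ∈ Ω) (hy : y ∈ Ω) (hz : z ∈ Ω)
    (hzl : z ∉ line[ℝ, x, y])
    (hext : ∀ s t : ℝ, 0 < s → 0 < t → x + s • (x - y) ∈ frontier Ω →
      y + t • (y - x) ∈ frontier Ω → x + s • (x - y) ∈ (closure Ω).extremePoints ℝ ∨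
        y + t • (y - x) ∈ (closure Ω).extremePoints ℝ) :
    d x y < d x z + d z y := by
  have hxz : x ≠ z := by rintro rfl; exact hzl (left_mem_affineSpan_pair ℝ x y)
  have hzy : z ≠ y := by rintro rfl; exact hzl (right_mem_affineSpan_pair ℝ x z)
  rcases eq_or_ne x y with rfl | hxy
  · rw [hd.1]
    exact add_pos (hd.pos hx hz hxz) (hd.pos hz hx hxz.symm)
  have hfr : Disjoint (frontier Ω) Ω := disjoint_frontier_iff_isOpen.2 hO
  obtain ⟨s₀, t₀, hs₀, ht₀, hxb, hyb, hdxy⟩ := hd.exists_exit hx hy hxy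
  obtain ⟨s₄, t₁, hs₄, ht₁, hb₄, hb₁, hdxz⟩ := hd.exists_exit hx hz hxz
  obtain ⟨s₃, t₂, hs₃, ht₂, hb₃, hb₂, hdzy⟩ := hd.exists_exit hz hy hzy
  have ht := hC.menelaus_le hO hy ht₀ ht₁.le ht₂ (hfr.notMem_of_mem_left hyb)
    (frontier_subset_closure hb₁) (frontier_subset_closure hb₂)
  have hs := hC.menelaus_le hO hx hs₀ hs₃.le hs₄ (hfr.notMem_of_mem_left hxb)
    (frontier_subset_closure hb₃) (frontier_subset_closure hb₄)
  have hτ : t₁ * t₂ / (1 + t₁ + t₂) ∈ Ioi 0 := by simp only [mem_Ioi]; positivity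
  have hσ : s₃ * s₄ / (1 + s₃ + s₄) ∈ Ioi 0 := by simp only [mem_Ioi]; positivity
  have hft := funkTerm_strictAntiOn.antitoneOn hτ ht₀ ht
  have hfs := funkTerm_strictAntiOn.antitoneOn hσ hs₀ hs
  rw [← funkTerm_add ht₁ ht₂] at hft
  rw [← funkTerm_add hs₃ hs₄] at hfs
  refine lt_of_le_of_ne (by linarith) fun heq => hzl ?_
  rcases hext s₀ t₀ hs₀ ht₀ hxb hyb with he | he
  · rw [funkTerm_strictAntiOn.injOn hs₀ hσ (by rw [← funkTerm_add hs₃ hs₄]; linarith)] at he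
    rw [pair_comm]
    exact mem_affineSpan_pair_of_mem_extremePoints hs₃.le hs₄ (frontier_subset_closure hb₃)
      (frontier_subset_closure hb₄) he
  · rw [funkTerm_strictAntiOn.injOn ht₀ hτ (by rw [← funkTerm_add ht₁ ht₂]; linarith)] at he
    exact mem_affineSpan_pair_of_mem_extremePoints ht₁.le ht₂ (frontier_subset_closure hb₁)
      (frontier_subset_closure hb₂) he

end IsHilbertDist

theorem hilbert_unique_geodesic_of_extreme_endpoint_general {n : ℕ}
    (Ω : Set (EuclideanSpace ℝ (Fin n)))
    (hO : IsOpen Ω) (hC : Convex ℝ Ω)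
    (d : EuclideanSpace ℝ (Fin n) → EuclideanSpace ℝ (Fin n) → ℝ)
    (hd : IsHilbertDist Ω d)
    (p q : EuclideanSpace ℝ (Fin n)) (hp : p ∈ frontier Ω) (hq : q ∈ frontier Ω)
    (hseg : openSegment ℝ p q ⊆ Ω)
    (hext : p ∈ Set.extremePoints ℝ (closure Ω) ∨ q ∈ Set.extremePoints ℝ (closure Ω)) :
    ∀ x ∈ openSegment ℝ p q, ∀ y ∈ openSegment ℝ p q, ∀ z ∈ Ω,
      (d x y = d x z + d z y ↔ z ∈ segment ℝ x y) := by
  have hfr : Disjoint (frontier Ω) Ω := disjoint_frontier_iff_isOpen.2 hO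
  have hpq : IsChord Ω p q := ⟨hfr.notMem_of_mem_left hp, hfr.notMem_of_mem_left hq, hseg⟩
  intro x hx y hy z hz
  by_cases hzl : z ∈ line[ℝ, p, q]
  · exact hd.eq_add_iff_mem_segment_of_isChord hO hC hpq hx hy
      (hpq.mem_openSegment_of_mem_affineSpan hO hC hzl hz)
  have hxl := openSegment_subset_affineSpan_pair p q hx
  have hyl := openSegment_subset_affineSpan_pair p q hy
  refine ⟨fun heq => ((hd.lt_add_of_notMem_affineSpan hO hC (hseg hx) (hseg hy) hz
      (fun h => hzl (affineSpan_pair_le_of_mem_of_mem hxl hyl h)) ?_).ne heq).elim,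
    fun hzs => (hzl ((AffineSubspace.convex _).segment_subset hxl hyl hzs)).elim⟩
  intro s t hs ht hxb hyb
  rcases pair_eq_pair_iff.1 (hpq.pair_eq hO hC hx hy hs ht hxb hyb) with ⟨rfl, rfl⟩ | ⟨rfl, rfl⟩
  exacts [hext, hext.symm]

/-- if `p, q` are frontier points with `(p,q) ⊆ Ω` and at least one of
them is an extreme point of the closure of `Ω`, then `(p,q)` is the unique geodesic
between any two of its points. -/
theorem hilbert_unique_geodesic_of_extreme_endpoint {n : ℕ}
    (Ω : Set (EuclideanSpace ℝ (Fin n)))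
    (hne : Ω.Nonempty) (hO : IsOpen Ω) (hB : Bornology.IsBounded Ω) (hC : Convex ℝ Ω)
    (d : EuclideanSpace ℝ (Fin n) → EuclideanSpace ℝ (Fin n) → ℝ)
    (hd : IsHilbertDist Ω d)
    (p q : EuclideanSpace ℝ (Fin n)) (hp : p ∈ frontier Ω) (hq : q ∈ frontier Ω)
    (hpq : p ≠ q) (hseg : openSegment ℝ p q ⊆ Ω)
    (hext : p ∈ Set.extremePoints ℝ (closure Ω) ∨ q ∈ Set.extremePoints ℝ (closure Ω)) :
    ∀ x ∈ openSegment ℝ p q, ∀ y ∈ openSegment ℝ p q, ∀ z ∈ Ω,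
      (d x y = d x z + d z y ↔ z ∈ segment ℝ x y) :=
  hilbert_unique_geodesic_of_extreme_endpoint_general Ω hO hC d hd p q hp hq hseg hext
end

section
/- Let Ω be a bounded open strictly convex subset of ℝⁿ with Hilbert distance d (strictly convex meaning the frontier of Ω contains no nondegenerate straight segment, equivalently every point of the frontier is an extreme point of the closure of Ω). Then for all x, y, z ∈ Ω, one has d(x,y) = d(x,z) + d(z,y) if and only if z lies on the closed segment [x,y]; that is, the affine segment is the unique geodesic between any two points of Ω. -/
/-!
The Hilbert distance is a sum of two Funk terms, `d x y = F(x, y) + F(y, x)` with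
`F(x, y) = log (‖ȳ - x‖ / ‖ȳ - y‖)`. If `φ < α` on `Ω`, then
`log (α - φ x) - log (α - φ y) ≤ F(x, y)`, with equality exactly when `φ ȳ = α`. Applying this
with the hyperplanes supporting `Ω` at `ȳ` and at `x̄`, the lower bounds telescope along `x, z, y`
and give `d x y ≤ d x z + d z y`. Equality forces the far endpoints of the chords `x → z` and
`z → y` onto the hyperplane through `ȳ`, hence the segment between them into the frontier; by
strict convexity they coincide, which puts `z` between `x` and `y`. Conversely, along a single
chord the Funk terms telescope exactly.
-/

open Real

section Segments

variable {E : Type*} [NormedAddCommGroup E] [NormedSpace ℝ E]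

lemma sbtw_of_mem_openSegment {x y z : E} (h : y ∈ openSegment ℝ x z) (hxy : x ≠ y) :
    Sbtw ℝ x y z := by
  refine ⟨mem_segment_iff_wbtw.1 (openSegment_subset_segment ℝ x z h), hxy.symm, ?_⟩
  rintro rfl
  exact hxy (right_mem_openSegment_iff.1 h)

lemma log_dist_lt_log_dist_of_sbtw {x y z : E} (h : Sbtw ℝ x y z) :
    log (dist z y) < log (dist z x) := by
  have hsum := h.wbtw.dist_add_dist
  have hxy := dist_pos.2 h.left_ne
  rw [dist_comm z y, dist_comm z x]
  exact log_lt_log (dist_pos.2 h.ne_right) (by linarith)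

lemma IsOpen.eq_of_sbtw_of_mem_frontier {Ω : Set E} (hO : IsOpen Ω) (hC : Convex ℝ Ω)
    {p q b b' : E} (hp : p ∈ Ω) (hb : b ∈ frontier Ω) (hb' : b' ∈ frontier Ω)
    (h : Sbtw ℝ p q b) (h' : Sbtw ℝ p q b') : b = b' := by
  have hout : ∀ c ∈ frontier Ω, c ∉ Ω := fun c hc hcΩ => hO.inter_frontier_eq.subset ⟨hcΩ, hc⟩
  have key : ∀ {c c'}, c ∈ frontier Ω → c' ∈ frontier Ω → Wbtw ℝ p c c' → c = c' := by
    intro c c' hc hc' hw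
    by_contra hne
    have hpc : p ≠ c := by rintro rfl; exact hout p hc hp
    have hseg := mem_openSegment_of_ne_left_right hpc (Ne.symm hne) hw.mem_segment
    rw [← hO.interior_eq] at hp
    exact hout c hc (hO.interior_eq ▸
      hC.openSegment_interior_closure_subset_interior hp (frontier_subset_closure hc') hseg)
  have hray : SameRay ℝ (b -ᵥ p) (b' -ᵥ p) :=
    h.wbtw.sameRay_vsub_left.symm.trans h'.wbtw.sameRay_vsub_left
      fun h0 => absurd (sub_eq_zero.1 h0) h.ne_left
  rcases wbtw_total_of_sameRay_vsub_left hray with hw | hw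
  exacts [key hb hb' hw, (key hb' hb hw).symm]

end Segments

section SupportingHyperplane

variable {E F : Type*} [NormedAddCommGroup E] [NormedSpace ℝ E] [FunLike F E ℝ]
  [LinearMapClass F ℝ E ℝ] {φ : F} {α : ℝ} {p q b : E}

lemma Sbtw.exists_dist_eq_and_sub_eq (h : Sbtw ℝ p q b) :
    ∃ t ∈ Set.Ioo (0 : ℝ) 1, dist b q = (1 - t) * dist b p ∧
      α - φ q = (1 - t) * (α - φ p) + t * (α - φ b) := by
  obtain ⟨t, ht, rfl⟩ := h.mem_image_Ioo
  refine ⟨t, ht, ?_, ?_⟩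
  · rw [dist_comm, dist_lineMap_right, Real.norm_of_nonneg (by linarith [ht.2]), dist_comm]
  · simp only [AffineMap.lineMap_apply_module, map_add, map_smul, smul_eq_mul]
    ring

lemma log_sub_log_eq_of_sbtw (hp : φ p < α) (hb : φ b = α) (h : Sbtw ℝ p q b) :
    log (α - φ p) - log (α - φ q) = log (dist b p) - log (dist b q) := by
  obtain ⟨t, ht, hdist, hφ⟩ := h.exists_dist_eq_and_sub_eq (φ := φ) (α := α)
  have h1t : 1 - t ≠ 0 := by linarith [ht.2]
  rw [hdist, hφ, hb, sub_self, mul_zero, add_zero,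
    log_mul h1t (sub_pos.2 hp).ne', log_mul h1t (dist_pos.2 h.left_ne_right.symm).ne']
  ring

lemma log_sub_log_lt_of_sbtw (hp : φ p < α) (hb : φ b < α) (h : Sbtw ℝ p q b) :
    log (α - φ p) - log (α - φ q) < log (dist b p) - log (dist b q) := by
  obtain ⟨t, ht, hdist, hφ⟩ := h.exists_dist_eq_and_sub_eq (φ := φ) (α := α)
  have h1t : 0 < 1 - t := by linarith [ht.2]
  have hφp : 0 < (1 - t) * (α - φ p) := mul_pos h1t (sub_pos.2 hp)
  have hlt : log ((1 - t) * (α - φ p)) < log (α - φ q) :=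
    log_lt_log hφp (by rw [hφ]; nlinarith [ht.1, sub_pos.2 hb])
  rw [hdist, log_mul h1t.ne' (dist_pos.2 h.left_ne_right.symm).ne']
  rw [log_mul h1t.ne' (sub_pos.2 hp).ne'] at hlt
  linarith

lemma log_sub_log_le_of_sbtw (hp : φ p < α) (hb : φ b ≤ α) (h : Sbtw ℝ p q b) :
    log (α - φ p) - log (α - φ q) ≤ log (dist b p) - log (dist b q) := by
  rcases hb.lt_or_eq with hb | hb
  exacts [(log_sub_log_lt_of_sbtw hp hb h).le, (log_sub_log_eq_of_sbtw hp hb h).le]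

lemma Convex.segment_subset_frontier_of_map_eq {Ω : Set E} (hC : Convex ℝ Ω)
    (hφ : ∀ u ∈ Ω, φ u < α) {w₁ w₂ : E} (hw₁ : w₁ ∈ closure Ω) (hw₂ : w₂ ∈ closure Ω)
    (h₁ : φ w₁ = α) (h₂ : φ w₂ = α) : segment ℝ w₁ w₂ ⊆ frontier Ω := by
  intro u hu
  have hφu : φ u = α :=
    (convex_hyperplane (f := φ) ⟨map_add φ, map_smul φ⟩ α).segment_subset h₁ h₂ hu
  exact ⟨hC.closure.segment_subset hw₁ hw₂ hu, fun hint => (hφ u (interior_subset hint)).ne hφu⟩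

end SupportingHyperplane

namespace IsHilbertDist

variable {n : ℕ} {Ω : Set (EuclideanSpace ℝ (Fin n))}
  {d : EuclideanSpace ℝ (Fin n) → EuclideanSpace ℝ (Fin n) → ℝ} {x y z : EuclideanSpace ℝ (Fin n)}

lemma exists_eq_log_sub (hd : IsHilbertDist Ω d) (hx : x ∈ Ω) (hy : y ∈ Ω) (hxy : x ≠ y) :
    ∃ a ∈ frontier Ω, ∃ b ∈ frontier Ω, Sbtw ℝ a x y ∧ Sbtw ℝ x y b ∧
      d x y = (log (dist b x) - log (dist b y)) + (log (dist a y) - log (dist a x)) := by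
  obtain ⟨a, ha, b, hb, hxa, hyb, hdxy⟩ := hd.2 x hx y hy hxy
  have hax : Sbtw ℝ a x y :=
    (sbtw_of_mem_openSegment (openSegment_symm ℝ a y ▸ hxa) hxy.symm).symm
  have hyb : Sbtw ℝ x y b := sbtw_of_mem_openSegment hyb hxy
  have hne : ∀ {u v : EuclideanSpace ℝ (Fin n)}, u ≠ v → ‖u - v‖ ≠ 0 :=
    fun h => (norm_pos_iff.2 (sub_ne_zero.2 h)).ne'
  refine ⟨a, ha, b, hb, hax, hyb, ?_⟩
  rw [hdxy, log_mul (div_ne_zero (hne hyb.left_ne_right.symm) (hne hyb.right_ne))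
      (div_ne_zero (hne hax.left_ne_right) (hne hax.left_ne)),
    log_div (hne hyb.left_ne_right.symm) (hne hyb.right_ne),
    log_div (hne hax.left_ne_right) (hne hax.left_ne)]
  simp only [dist_eq_norm]

lemma eq_log_sub (hO : IsOpen Ω) (hC : Convex ℝ Ω) (hd : IsHilbertDist Ω d) (hx : x ∈ Ω)
    (hy : y ∈ Ω) {a b : EuclideanSpace ℝ (Fin n)} (ha : a ∈ frontier Ω) (hb : b ∈ frontier Ω)
    (hax : Sbtw ℝ a x y) (hyb : Sbtw ℝ x y b) :
    d x y = (log (dist b x) - log (dist b y)) + (log (dist a y) - log (dist a x)) := by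
  obtain ⟨a', ha', b', hb', hax', hyb', hdxy⟩ := hd.exists_eq_log_sub hx hy hax.ne_right
  obtain rfl := hO.eq_of_sbtw_of_mem_frontier hC hy ha ha' hax.symm hax'.symm
  obtain rfl := hO.eq_of_sbtw_of_mem_frontier hC hx hb hb' hyb hyb'
  exact hdxy

lemma pos_of_ne (hd : IsHilbertDist Ω d) (hx : x ∈ Ω) (hy : y ∈ Ω) (hxy : x ≠ y) :
    0 < d x y := by
  obtain ⟨a, -, b, -, hax, hyb, hdxy⟩ := hd.exists_eq_log_sub hx hy hxy
  linarith [log_dist_lt_log_dist_of_sbtw hyb, log_dist_lt_log_dist_of_sbtw hax.symm]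

lemma add_eq_of_sbtw (hO : IsOpen Ω) (hC : Convex ℝ Ω) (hd : IsHilbertDist Ω d) (hx : x ∈ Ω)
    (hy : y ∈ Ω) (hz : z ∈ Ω) (h : Sbtw ℝ x z y) : d x z + d z y = d x y := by
  obtain ⟨a, ha, b, hb, hax, hyb, hdxy⟩ := hd.exists_eq_log_sub hx hy h.left_ne_right
  rw [hdxy, hd.eq_log_sub hO hC hx hz ha hb (hax.trans_right_left h) (hyb.trans_left h),
    hd.eq_log_sub hO hC hz hy ha hb (hax.trans_right h) (hyb.trans_left_right h)]
  ring

lemma exists_supporting_hyperplane_of_add_eq (hO : IsOpen Ω) (hC : Convex ℝ Ω)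
    (hd : IsHilbertDist Ω d) (hx : x ∈ Ω) (hy : y ∈ Ω) (hz : z ∈ Ω) (hxy : x ≠ y) (hxz : x ≠ z)
    (hzy : z ≠ y) (heq : d x y = d x z + d z y) :
    ∃ (φ : StrongDual ℝ (EuclideanSpace ℝ (Fin n))) (α : ℝ), (∀ u ∈ Ω, φ u < α) ∧
      ∃ w₁ ∈ frontier Ω, ∃ w₂ ∈ frontier Ω, Sbtw ℝ x z w₁ ∧ Sbtw ℝ z y w₂ ∧
        φ w₁ = α ∧ φ w₂ = α := by
  obtain ⟨a, ha, b, hb, hax, hyb, hdxy⟩ := hd.exists_eq_log_sub hx hy hxy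
  obtain ⟨a₁, ha₁, b₁, hb₁, hax₁, hzb₁, hdxz⟩ := hd.exists_eq_log_sub hx hz hxz
  obtain ⟨a₂, ha₂, b₂, hb₂, haz₂, hyb₂, hdzy⟩ := hd.exists_eq_log_sub hz hy hzy
  have hout : ∀ c ∈ frontier Ω, c ∉ Ω := fun c hc hcΩ => hO.inter_frontier_eq.subset ⟨hcΩ, hc⟩
  obtain ⟨φ, hφ⟩ := geometric_hahn_banach_open_point hC hO (hout b hb)
  obtain ⟨ψ, hψ⟩ := geometric_hahn_banach_open_point hC hO (hout a ha)
  have hcl : ∀ f : StrongDual ℝ (EuclideanSpace ℝ (Fin n)), ∀ c, (∀ u ∈ Ω, f u < f c) →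
      ∀ u ∈ frontier Ω, f u ≤ f c := fun f c hf u hu =>
    closure_minimal (fun v hv => (hf v hv).le) (isClosed_le f.continuous continuous_const)
      (frontier_subset_closure hu)
  have exy := log_sub_log_eq_of_sbtw (hφ x hx) rfl hyb
  have eyx := log_sub_log_eq_of_sbtw (hψ y hy) rfl hax.symm
  have lxz := log_sub_log_le_of_sbtw (hφ x hx) (hcl φ b hφ b₁ hb₁) hzb₁
  have lzx := log_sub_log_le_of_sbtw (hψ z hz) (hcl ψ a hψ a₁ ha₁) hax₁.symm
  have lzy := log_sub_log_le_of_sbtw (hφ z hz) (hcl φ b hφ b₂ hb₂) hyb₂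
  have lyz := log_sub_log_le_of_sbtw (hψ y hy) (hcl ψ a hψ a₂ ha₂) haz₂.symm
  -- `heq` forces equality in each of the four lower bounds
  refine ⟨φ, φ b, hφ, b₁, hb₁, b₂, hb₂, hzb₁, hyb₂, ?_, ?_⟩
  · by_contra hne
    linarith [log_sub_log_lt_of_sbtw (hφ x hx) ((hcl φ b hφ b₁ hb₁).lt_of_ne hne) hzb₁]
  · by_contra hne
    linarith [log_sub_log_lt_of_sbtw (hφ z hz) ((hcl φ b hφ b₂ hb₂).lt_of_ne hne) hyb₂]

end IsHilbertDist

theorem hilbert_unique_geodesics_of_strictly_convex_general {n : ℕ}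
    (Ω : Set (EuclideanSpace ℝ (Fin n)))
    (hO : IsOpen Ω) (hC : Convex ℝ Ω)
    (hstrict : ∀ p q : EuclideanSpace ℝ (Fin n), p ≠ q → ¬ segment ℝ p q ⊆ frontier Ω)
    (d : EuclideanSpace ℝ (Fin n) → EuclideanSpace ℝ (Fin n) → ℝ)
    (hd : IsHilbertDist Ω d) :
    ∀ x ∈ Ω, ∀ y ∈ Ω, ∀ z ∈ Ω,
      (d x y = d x z + d z y ↔ z ∈ segment ℝ x y) := by
  intro x hx y hy z hz
  rcases eq_or_ne z x with rfl | hzx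
  · simp [hd.1, left_mem_segment]
  rcases eq_or_ne z y with rfl | hzy
  · simp [hd.1, right_mem_segment]
  rcases eq_or_ne x y with rfl | hxy
  · simp only [hd.1, segment_same, Set.mem_singleton_iff, hzx, iff_false]
    linarith [hd.pos_of_ne hx hz hzx.symm, hd.pos_of_ne hz hx hzx]
  constructor
  · intro heq
    obtain ⟨φ, α, hφ, w₁, hw₁, w₂, hw₂, hxzw, hzyw, h₁, h₂⟩ :=
      hd.exists_supporting_hyperplane_of_add_eq hO hC hx hy hz hxy hzx.symm hzy heq
    rcases eq_or_ne w₁ w₂ with rfl | hne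
    · exact (hxzw.wbtw.trans_right_left hzyw.wbtw).mem_segment
    · exact absurd (hC.segment_subset_frontier_of_map_eq hφ (frontier_subset_closure hw₁)
        (frontier_subset_closure hw₂) h₁ h₂) (hstrict w₁ w₂ hne)
  · intro hseg
    exact (hd.add_eq_of_sbtw hO hC hx hy hz ⟨mem_segment_iff_wbtw.1 hseg, hzx, hzy⟩).symm

/-- in a strictly convex bounded open domain (no nondegenerate segment
in the frontier) the affine segment is the unique geodesic between any two points. -/
theorem hilbert_unique_geodesics_of_strictly_convex {n : ℕ}
    (Ω : Set (EuclideanSpace ℝ (Fin n)))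
    (hne : Ω.Nonempty) (hO : IsOpen Ω) (hB : Bornology.IsBounded Ω) (hC : Convex ℝ Ω)
    (hstrict : ∀ p q : EuclideanSpace ℝ (Fin n), p ≠ q → ¬ segment ℝ p q ⊆ frontier Ω)
    (d : EuclideanSpace ℝ (Fin n) → EuclideanSpace ℝ (Fin n) → ℝ)
    (hd : IsHilbertDist Ω d) :
    ∀ x ∈ Ω, ∀ y ∈ Ω, ∀ z ∈ Ω,
      (d x y = d x z + d z y ↔ z ∈ segment ℝ x y) :=
  hilbert_unique_geodesics_of_strictly_convex_general Ω hO hC hstrict d hd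
end

section
/- Let Ω be a bounded open convex subset of ℝⁿ with Hilbert distance d_Ω. Let A be an n×n real matrix, b, c ∈ ℝⁿ and δ ∈ ℝ such that the (n+1)×(n+1) block matrix M = [[A, b],[cᵀ, δ]] is invertible and ⟨c,x⟩ + δ ≠ 0 for every x in the closure of Ω, and define f(x) = (A·x + b)/(⟨c,x⟩ + δ). Then f(Ω) is a bounded open convex subset of ℝⁿ, and for all x, y ∈ Ω one has d_{f(Ω)}(f(x), f(y)) = d_Ω(x, y); that is, f restricts to an isometry from (Ω, d_Ω) onto (f(Ω), d_{f(Ω)}). -/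
open AffineMap Matrix

section Scalar

variable {u v t : ℝ}

theorem one_sub_mul_div_lineMap (h : lineMap u v t ≠ 0) :
    1 - t * v / lineMap u v t = (1 - t) * u / lineMap u v t := by
  rw [lineMap_apply_ring] at h ⊢
  field_simp
  ring

theorem mul_div_lineMap_neg (ht : t < 0) (h : 0 < v * lineMap u v t) :
    t * v / lineMap u v t < 0 := by
  rw [mul_div_assoc]
  exact mul_neg_of_neg_of_pos ht (div_pos_iff.2 (mul_pos_iff.1 h))

theorem one_lt_mul_div_lineMap (ht : 1 < t) (h : 0 < u * lineMap u v t) :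
    1 < t * v / lineMap u v t := by
  have h1 : 1 - t * v / lineMap u v t = (1 - t) * (u / lineMap u v t) := by
    rw [one_sub_mul_div_lineMap (right_ne_zero_of_mul h.ne'), mul_div_assoc]
  nlinarith [mul_pos (sub_pos.2 ht) (div_pos_iff.2 (mul_pos_iff.1 h))]

theorem mul_lineMap_pos (ht : t ∈ Set.Icc 0 1) (h : 0 < u * v) : 0 < u * lineMap u v t := by
  rw [lineMap_apply_ring]
  rcases ht.2.lt_or_eq with ht1 | rfl
  · nlinarith [ht.1, mul_pos (sub_pos.2 ht1) (mul_self_pos.2 (left_ne_zero_of_mul h.ne'))]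
  · simpa using h

theorem mul_div_lineMap_mem_Icc (ht : t ∈ Set.Icc 0 1) (h : 0 < u * v) :
    t * v / lineMap u v t ∈ Set.Icc 0 1 := by
  have hu := mul_lineMap_pos ht h
  have hv := mul_lineMap_pos (u := v) (v := u) (t := 1 - t)
    ⟨sub_nonneg.2 ht.2, by linarith [ht.1]⟩ (by rwa [mul_comm])
  rw [lineMap_apply_one_sub] at hv
  have h1 : 1 - t * v / lineMap u v t = (1 - t) * (u / lineMap u v t) := by
    rw [one_sub_mul_div_lineMap (right_ne_zero_of_mul hu.ne'), mul_div_assoc]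
  rw [mul_div_assoc] at h1 ⊢
  constructor
  · exact mul_nonneg ht.1 (div_pos_iff.2 (mul_pos_iff.1 hv)).le
  · nlinarith [mul_nonneg (sub_nonneg.2 ht.2) (div_pos_iff.2 (mul_pos_iff.1 hu)).le]

/-- The cross ratio of the parameters `a, 0, 1, b`: the argument of the logarithm in the Hilbert
distance of `x, y` when the boundary points are `lineMap x y a` and `lineMap x y b`. -/
noncomputable def hilbertCrossRatio (a b : ℝ) : ℝ :=
  |b| / |1 - b| * (|1 - a| / |a|)

theorem hilbertCrossRatio_mul_div_lineMap {a b : ℝ} (hu : u ≠ 0) (hv : v ≠ 0)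
    (ha : lineMap u v a ≠ 0) (hb : lineMap u v b ≠ 0) :
    hilbertCrossRatio (a * v / lineMap u v a) (b * v / lineMap u v b) = hilbertCrossRatio a b := by
  simp only [hilbertCrossRatio, one_sub_mul_div_lineMap ha, one_sub_mul_div_lineMap hb, abs_div,
    abs_mul]
  rw [div_div_div_cancel_right₀ (abs_ne_zero.2 ha), div_div_div_cancel_right₀ (abs_ne_zero.2 hb),
    mul_div_mul_comm, mul_div_mul_comm (|1 - a|)]
  field_simp

end Scalar

theorem hilbertRatio_lineMap {E : Type*} [NormedAddCommGroup E] [NormedSpace ℝ E] {x y : E}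
    (hxy : x ≠ y) (a b : ℝ) :
    ‖lineMap x y b - x‖ / ‖lineMap x y b - y‖ * (‖lineMap x y a - y‖ / ‖lineMap x y a - x‖) =
      hilbertCrossRatio a b := by
  simp only [← dist_eq_norm, dist_lineMap_left, dist_lineMap_right, Real.norm_eq_abs]
  rw [mul_div_mul_right _ _ (dist_ne_zero.2 hxy), mul_div_mul_right _ _ (dist_ne_zero.2 hxy)]
  rfl

section Segment

variable {E : Type*} [AddCommGroup E] [Module ℝ E] {x y p : E} {a b : ℝ}

theorem exists_lineMap_neg_of_mem_openSegment (h : x ∈ openSegment ℝ p y) :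
    ∃ a : ℝ, a < 0 ∧ p = lineMap x y a := by
  obtain ⟨t, ⟨ht0, ht1⟩, rfl⟩ := (openSegment_eq_image_lineMap (𝕜 := ℝ) p y).subset h
  have ht1' : 1 - t ≠ 0 := (sub_pos.2 ht1).ne'
  refine ⟨-t / (1 - t), div_neg_of_neg_of_pos (neg_neg_of_pos ht0) (sub_pos.2 ht1), ?_⟩
  simp only [lineMap_apply_module']
  match_scalars <;> field_simp <;> ring

theorem exists_one_lt_lineMap_of_mem_openSegment (h : y ∈ openSegment ℝ x p) :
    ∃ b : ℝ, 1 < b ∧ p = lineMap x y b := by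
  obtain ⟨a, ha, rfl⟩ :=
    exists_lineMap_neg_of_mem_openSegment (openSegment_symm (𝕜 := ℝ) x p ▸ h)
  exact ⟨1 - a, by linarith, (lineMap_apply_one_sub x y a).symm⟩

variable [TopologicalSpace E] [IsTopologicalAddGroup E] [ContinuousSMul ℝ E]

theorem Convex.lineMap_mul_mem_interior {U : Set E} (hC : Convex ℝ U) (hx : x ∈ interior U)
    (ha : lineMap x y a ∈ closure U) {r : ℝ} (hr0 : 0 < r) (hr1 : r < 1) :
    lineMap x y (r * a) ∈ interior U := by
  refine hC.openSegment_interior_closure_subset_interior hx ha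
    ⟨1 - r, r, sub_pos.2 hr1, hr0, by ring, ?_⟩
  simp only [lineMap_apply_module']
  module

theorem IsOpen.lineMap_mul_mem {U : Set E} (hO : IsOpen U) (hC : Convex ℝ U) (hx : x ∈ U)
    (ha : lineMap x y a ∈ frontier U) {r : ℝ} (hr0 : 0 < r) (hr1 : r < 1) :
    lineMap x y (r * a) ∈ U := by
  rw [← hO.interior_eq] at hx ⊢
  exact hC.lineMap_mul_mem_interior hx (frontier_subset_closure ha) hr0 hr1

theorem IsOpen.eq_of_lineMap_mem_frontier {U : Set E} (hO : IsOpen U) (hC : Convex ℝ U)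
    (hx : x ∈ U) (ha : lineMap x y a ∈ frontier U) (hb : lineMap x y b ∈ frontier U)
    (hab : 0 < a * b) : a = b := by
  have ha0 : a ≠ 0 := left_ne_zero_of_mul hab.ne'
  have hb0 : b ≠ 0 := right_ne_zero_of_mul hab.ne'
  have hba : 0 < b / a := div_pos_iff.2 (mul_pos_iff.1 (by rwa [mul_comm]))
  have not_mem : ∀ c : ℝ, lineMap x y c ∈ frontier U → lineMap x y c ∉ U :=
    fun c hc => (hO.frontier_eq ▸ hc).2
  rcases lt_trichotomy (b / a) 1 with h | h | h
  · have := hO.lineMap_mul_mem hC hx ha hba h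
    rw [div_mul_cancel₀ _ ha0] at this
    exact absurd this (not_mem b hb)
  · exact ((div_eq_one_iff_eq ha0).1 h).symm
  · have hab' : a / b < 1 := inv_div b a ▸ inv_lt_one_of_one_lt₀ h
    have := hO.lineMap_mul_mem hC hx hb (inv_div b a ▸ inv_pos.2 hba) hab'
    rw [div_mul_cancel₀ _ hb0] at this
    exact absurd this (not_mem a ha)

end Segment

theorem IsPreconnected.mul_pos_of_ne_zero {X : Type*} [TopologicalSpace X] {s : Set X}
    {f : X → ℝ} (hs : IsPreconnected s) (hf : ContinuousOn f s) (h0 : ∀ x ∈ s, f x ≠ 0)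
    {x y : X} (hx : x ∈ s) (hy : y ∈ s) : 0 < f x * f y := by
  by_contra! hneg
  have hmem : (0 : ℝ) ∈ Set.Icc (f x) (f y) ∪ Set.Icc (f y) (f x) := by
    rcases mul_nonpos_iff.1 hneg with ⟨h1, h2⟩ | ⟨h1, h2⟩
    · exact Or.inr ⟨h2, h1⟩
    · exact Or.inl ⟨h1, h2⟩
  obtain ⟨z, hz, hz0⟩ : (0 : ℝ) ∈ f '' s := by
    rcases hmem with h | h
    · exact hs.intermediate_value hx hy hf h
    · exact hs.intermediate_value hy hx hf h
  exact h0 z hz hz0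

namespace IsHilbertDist

variable {n : ℕ} {Ω : Set (EuclideanSpace ℝ (Fin n))}
  {d : EuclideanSpace ℝ (Fin n) → EuclideanSpace ℝ (Fin n) → ℝ} {x y : EuclideanSpace ℝ (Fin n)}

theorem exists_lineMap (hd : IsHilbertDist Ω d) (hx : x ∈ Ω) (hy : y ∈ Ω) (hxy : x ≠ y) :
    ∃ a : ℝ, a < 0 ∧ ∃ b : ℝ, 1 < b ∧ lineMap x y a ∈ frontier Ω ∧
      lineMap x y b ∈ frontier Ω ∧ d x y = Real.log (hilbertCrossRatio a b) := by
  obtain ⟨p, hp, q, hq, hxp, hyq, hdxy⟩ := hd.2 x hx y hy hxy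
  obtain ⟨a, ha, rfl⟩ := exists_lineMap_neg_of_mem_openSegment hxp
  obtain ⟨b, hb, rfl⟩ := exists_one_lt_lineMap_of_mem_openSegment hyq
  exact ⟨a, ha, b, hb, hp, hq, hdxy.trans (congrArg _ (hilbertRatio_lineMap hxy a b))⟩

theorem eq_log_hilbertCrossRatio (hd : IsHilbertDist Ω d) (hO : IsOpen Ω) (hC : Convex ℝ Ω)
    (hx : x ∈ Ω) (hy : y ∈ Ω) (hxy : x ≠ y) {a b : ℝ} (ha : a < 0) (hb : 1 < b)
    (hxa : lineMap x y a ∈ frontier Ω) (hyb : lineMap x y b ∈ frontier Ω) :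
    d x y = Real.log (hilbertCrossRatio a b) := by
  obtain ⟨a', ha', b', hb', hxa', hyb', hdxy⟩ := hd.exists_lineMap hx hy hxy
  rwa [hO.eq_of_lineMap_mem_frontier hC hx hxa' hxa (mul_pos_of_neg_of_neg ha' ha),
    hO.eq_of_lineMap_mem_frontier hC hx hyb' hyb (by nlinarith)] at hdxy

end IsHilbertDist

section ProjectiveMap

variable {ι : Type*}

def homLift (x : EuclideanSpace ℝ ι) : ι ⊕ Fin 1 → ℝ :=
  Sum.elim (fun i => x i) 1

theorem continuous_homLift : Continuous (homLift (ι := ι)) :=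
  continuous_pi fun j => by
    cases j <;> simp only [homLift, Sum.elim_inl, Sum.elim_inr]
    · exact (continuous_apply _).comp (PiLp.continuous_ofLp 2 _)
    · exact continuous_const

theorem homLift_lineMap (x y : EuclideanSpace ℝ ι) (t : ℝ) :
    homLift (lineMap x y t) = lineMap (homLift x) (homLift y) t := by
  ext (i | i) <;> simp [homLift, lineMap_apply_module]

variable [Fintype ι]

namespace Matrix

variable (P : Matrix (ι ⊕ Fin 1) (ι ⊕ Fin 1) ℝ)

noncomputable def projDen (x : EuclideanSpace ℝ ι) : ℝ :=
  (P *ᵥ homLift x) (Sum.inr 0)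

noncomputable def projMap (x : EuclideanSpace ℝ ι) : EuclideanSpace ℝ ι :=
  (P.projDen x)⁻¹ • WithLp.toLp 2 fun i => (P *ᵥ homLift x) (Sum.inl i)

theorem mulVec_homLift_lineMap (x y : EuclideanSpace ℝ ι) (t : ℝ) :
    P *ᵥ homLift (lineMap x y t) = lineMap (P *ᵥ homLift x) (P *ᵥ homLift y) t := by
  rw [homLift_lineMap]
  exact P.mulVecLin.toAffineMap.apply_lineMap _ _ _

theorem projDen_lineMap (x y : EuclideanSpace ℝ ι) (t : ℝ) :
    P.projDen (lineMap x y t) = lineMap (P.projDen x) (P.projDen y) t := by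
  rw [projDen, projDen, projDen, mulVec_homLift_lineMap]
  simp [lineMap_apply_module]

theorem projMap_lineMap {x y : EuclideanSpace ℝ ι} {t : ℝ} (hx : P.projDen x ≠ 0)
    (hy : P.projDen y ≠ 0) (ht : P.projDen (lineMap x y t) ≠ 0) :
    P.projMap (lineMap x y t) =
      lineMap (P.projMap x) (P.projMap y) (t * P.projDen y / P.projDen (lineMap x y t)) := by
  have hD := P.projDen_lineMap x y t
  ext i
  rw [hD] at ht
  simp only [projMap, mulVec_homLift_lineMap, hD]
  simp only [lineMap_apply_module, PiLp.add_apply,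
    PiLp.smul_apply, Pi.add_apply, Pi.smul_apply, smul_eq_mul] at ht ⊢
  field_simp
  ring

theorem homLift_projMap {x : EuclideanSpace ℝ ι} (hx : P.projDen x ≠ 0) :
    homLift (P.projMap x) = (P.projDen x)⁻¹ • (P *ᵥ homLift x) := by
  ext (i | i)
  · simp [homLift, projMap]
  · rw [Fin.fin_one_eq_zero i, Pi.smul_apply, smul_eq_mul, ← projDen, inv_mul_cancel₀ hx]
    rfl

theorem continuous_projDen : Continuous P.projDen :=
  (continuous_apply _).comp (continuous_const.matrix_mulVec continuous_homLift)

theorem continuousOn_projMap : ContinuousOn P.projMap {x | P.projDen x ≠ 0} := by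
  refine ((P.continuous_projDen.continuousOn).inv₀ fun x hx => hx).smul ?_
  exact ((PiLp.continuous_toLp 2 _).comp (continuous_pi fun i => (continuous_apply _).comp
    (continuous_const.matrix_mulVec continuous_homLift))).continuousOn

variable {P} [DecidableEq ι] {Q : Matrix (ι ⊕ Fin 1) (ι ⊕ Fin 1) ℝ}

theorem mulVec_homLift_projMap (hQP : Q * P = 1) {x : EuclideanSpace ℝ ι}
    (hx : P.projDen x ≠ 0) : Q *ᵥ homLift (P.projMap x) = (P.projDen x)⁻¹ • homLift x := by
  rw [homLift_projMap P hx, mulVec_smul, mulVec_mulVec, hQP, one_mulVec]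

theorem projDen_projMap (hQP : Q * P = 1) {x : EuclideanSpace ℝ ι} (hx : P.projDen x ≠ 0) :
    Q.projDen (P.projMap x) = (P.projDen x)⁻¹ := by
  rw [projDen, mulVec_homLift_projMap hQP hx, Pi.smul_apply, smul_eq_mul]
  exact mul_one _

theorem projMap_projMap (hQP : Q * P = 1) {x : EuclideanSpace ℝ ι} (hx : P.projDen x ≠ 0) :
    Q.projMap (P.projMap x) = x := by
  ext i
  rw [projMap, mulVec_homLift_projMap hQP hx, projDen_projMap hQP hx, inv_inv]
  simp [homLift, hx]

variable {Ω : Set (EuclideanSpace ℝ ι)}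

theorem injOn_projMap (hP : IsUnit P.det) : Set.InjOn P.projMap {x | P.projDen x ≠ 0} :=
  fun x hx y hy hxy => by
    rw [← projMap_projMap (nonsing_inv_mul P hP) hx, hxy,
      projMap_projMap (nonsing_inv_mul P hP) hy]

theorem image_projMap_eq (hP : IsUnit P.det) (hden : ∀ x ∈ Ω, P.projDen x ≠ 0) :
    P.projMap '' Ω = {z | P⁻¹.projDen z ≠ 0} ∩ P⁻¹.projMap ⁻¹' Ω := by
  ext z
  constructor
  · rintro ⟨x, hx, rfl⟩
    have hQP := nonsing_inv_mul P hP
    exact ⟨by simpa [projDen_projMap hQP (hden x hx)] using hden x hx,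
      by simpa [projMap_projMap hQP (hden x hx)] using hx⟩
  · rintro ⟨hz, hzΩ⟩
    exact ⟨_, hzΩ, projMap_projMap (mul_nonsing_inv P hP) hz⟩

theorem isOpen_image_projMap (hP : IsUnit P.det) (hO : IsOpen Ω)
    (hden : ∀ x ∈ Ω, P.projDen x ≠ 0) : IsOpen (P.projMap '' Ω) := by
  rw [image_projMap_eq hP hden]
  exact P⁻¹.continuousOn_projMap.isOpen_inter_preimage
    (isOpen_ne_fun P⁻¹.continuous_projDen continuous_const) hO

omit [DecidableEq ι] in
theorem isBounded_image_projMap (hB : Bornology.IsBounded Ω)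
    (hden : ∀ x ∈ closure Ω, P.projDen x ≠ 0) : Bornology.IsBounded (P.projMap '' Ω) :=
  (hB.isCompact_closure.image_of_continuousOn (P.continuousOn_projMap.mono hden)).isBounded.subset
    (Set.image_mono subset_closure)

theorem convex_image_projMap (hP : IsUnit P.det) (hC : Convex ℝ Ω)
    (hden : ∀ x ∈ Ω, P.projDen x ≠ 0) : Convex ℝ (P.projMap '' Ω) := by
  have hQP := nonsing_inv_mul P hP
  rw [convex_iff_segment_subset]
  rintro _ ⟨x, hx, rfl⟩ _ ⟨y, hy, rfl⟩
  rw [segment_eq_image_lineMap]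
  rintro _ ⟨t, ht, rfl⟩
  set Q := P⁻¹
  have hQx := projDen_projMap hQP (hden x hx)
  have hQy := projDen_projMap hQP (hden y hy)
  have hsign : 0 < Q.projDen (P.projMap x) * Q.projDen (P.projMap y) := by
    rw [hQx, hQy, ← mul_inv]
    exact inv_pos.2 (hC.isPreconnected.mul_pos_of_ne_zero P.continuous_projDen.continuousOn
      hden hx hy)
  have hz : Q.projDen (lineMap (P.projMap x) (P.projMap y) t) ≠ 0 := by
    rw [projDen_lineMap]
    exact right_ne_zero_of_mul (mul_lineMap_pos ht hsign).ne'
  refine ⟨Q.projMap (lineMap (P.projMap x) (P.projMap y) t), ?_,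
    projMap_projMap (mul_nonsing_inv P hP) hz⟩
  rw [Q.projMap_lineMap (left_ne_zero_of_mul hsign.ne') (right_ne_zero_of_mul hsign.ne') hz,
    projMap_projMap hQP (hden x hx), projMap_projMap hQP (hden y hy), projDen_lineMap]
  exact hC.lineMap_mem hx hy (mul_div_lineMap_mem_Icc ht hsign)

theorem projMap_mem_frontier_image (hP : IsUnit P.det) (hO : IsOpen Ω)
    (hden : ∀ x ∈ closure Ω, P.projDen x ≠ 0) {z : EuclideanSpace ℝ ι} (hz : z ∈ frontier Ω) :
    P.projMap z ∈ frontier (P.projMap '' Ω) := by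
  have hzc := frontier_subset_closure hz
  rw [frontier, (isOpen_image_projMap hP hO fun x hx => hden x (subset_closure hx)).interior_eq]
  refine ⟨(P.continuousOn_projMap.mono hden).image_closure ⟨z, hzc, rfl⟩, ?_⟩
  rintro ⟨w, hw, hwz⟩
  rw [injOn_projMap hP (hden w (subset_closure hw)) (hden z hzc) hwz] at hw
  exact (hO.frontier_eq ▸ hz).2 hw

end Matrix

end ProjectiveMap

theorem Matrix.hilbertDist_projMap_eq {n : ℕ} {P : Matrix (Fin n ⊕ Fin 1) (Fin n ⊕ Fin 1) ℝ}
    {Ω : Set (EuclideanSpace ℝ (Fin n))}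
    {d₁ d₂ : EuclideanSpace ℝ (Fin n) → EuclideanSpace ℝ (Fin n) → ℝ}
    (hP : IsUnit P.det) (hO : IsOpen Ω) (hC : Convex ℝ Ω)
    (hden : ∀ x ∈ closure Ω, P.projDen x ≠ 0) (hd₁ : IsHilbertDist Ω d₁)
    (hd₂ : IsHilbertDist (P.projMap '' Ω) d₂) {x y : EuclideanSpace ℝ (Fin n)} (hx : x ∈ Ω)
    (hy : y ∈ Ω) : d₂ (P.projMap x) (P.projMap y) = d₁ x y := by
  rcases eq_or_ne x y with rfl | hxy
  · rw [hd₁.1, hd₂.1]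
  have hdenΩ : ∀ z ∈ Ω, P.projDen z ≠ 0 := fun z hz => hden z (subset_closure hz)
  have hsign : ∀ z ∈ closure Ω, ∀ w ∈ closure Ω, 0 < P.projDen z * P.projDen w :=
    fun z hz w hw => hC.closure.isPreconnected.mul_pos_of_ne_zero
      P.continuous_projDen.continuousOn hden hz hw
  obtain ⟨a, ha, b, hb, hxa, hyb, hd₁xy⟩ := hd₁.exists_lineMap hx hy hxy
  have hxa' := frontier_subset_closure hxa
  have hyb' := frontier_subset_closure hyb
  have hfa := P.projMap_lineMap (hdenΩ x hx) (hdenΩ y hy) (hden _ hxa')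
  have hfb := P.projMap_lineMap (hdenΩ x hx) (hdenΩ y hy) (hden _ hyb')
  have hsa := hsign y (subset_closure hy) _ hxa'
  have hsb := hsign x (subset_closure hx) _ hyb'
  rw [projDen_lineMap] at hfa hfb hsa hsb
  rw [hd₁xy, hd₂.eq_log_hilbertCrossRatio (isOpen_image_projMap hP hO hdenΩ)
    (convex_image_projMap hP hC hdenΩ) (Set.mem_image_of_mem _ hx) (Set.mem_image_of_mem _ hy)
    (fun h => hxy (injOn_projMap hP (hdenΩ x hx) (hdenΩ y hy) h))
    (mul_div_lineMap_neg ha hsa) (one_lt_mul_div_lineMap hb hsb)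
    (hfa ▸ projMap_mem_frontier_image hP hO hden hxa)
    (hfb ▸ projMap_mem_frontier_image hP hO hden hyb),
    hilbertCrossRatio_mul_div_lineMap (hdenΩ x hx) (hdenΩ y hy) (right_ne_zero_of_mul hsa.ne')
      (right_ne_zero_of_mul hsb.ne')]

theorem projDen_projMat {n : ℕ} (A : Matrix (Fin n) (Fin n) ℝ) (b c : EuclideanSpace ℝ (Fin n))
    (δ : ℝ) (x : EuclideanSpace ℝ (Fin n)) :
    (projMat A b c δ).projDen x = (∑ i, c i * x i) + δ := by
  simp [projDen, projMat, mulVec, dotProduct, homLift]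

theorem projMap_projMat {n : ℕ} (A : Matrix (Fin n) (Fin n) ℝ) (b c : EuclideanSpace ℝ (Fin n))
    (δ : ℝ) : (projMat A b c δ).projMap = fracLin A b c δ := by
  ext x i
  simp only [projMap, projDen_projMat, fracLin]
  simp [projMat, mulVec, dotProduct, homLift, mul_add]

theorem projective_map_is_hilbert_isometry_general {n : ℕ}
    (Ω : Set (EuclideanSpace ℝ (Fin n)))
    (hO : IsOpen Ω) (hB : Bornology.IsBounded Ω) (hC : Convex ℝ Ω)
    (d₁ : EuclideanSpace ℝ (Fin n) → EuclideanSpace ℝ (Fin n) → ℝ)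
    (hd₁ : IsHilbertDist Ω d₁)
    (A : Matrix (Fin n) (Fin n) ℝ) (b c : EuclideanSpace ℝ (Fin n)) (δ : ℝ)
    (hdet : (projMat A b c δ).det ≠ 0)
    (hden : ∀ x ∈ closure Ω, (∑ i, c i * x i) + δ ≠ 0) :
    (Bornology.IsBounded (fracLin A b c δ '' Ω) ∧ IsOpen (fracLin A b c δ '' Ω) ∧
      Convex ℝ (fracLin A b c δ '' Ω)) ∧
    ∀ d₂ : EuclideanSpace ℝ (Fin n) → EuclideanSpace ℝ (Fin n) → ℝ,
      IsHilbertDist (fracLin A b c δ '' Ω) d₂ →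
      ∀ x ∈ Ω, ∀ y ∈ Ω, d₂ (fracLin A b c δ x) (fracLin A b c δ y) = d₁ x y := by
  have hP : IsUnit (projMat A b c δ).det := hdet.isUnit
  have hden' : ∀ x ∈ closure Ω, (projMat A b c δ).projDen x ≠ 0 := fun x hx => by
    rw [projDen_projMat]
    exact hden x hx
  have hdenΩ : ∀ x ∈ Ω, (projMat A b c δ).projDen x ≠ 0 :=
    fun x hx => hden' x (subset_closure hx)
  rw [← projMap_projMat]
  exact ⟨⟨isBounded_image_projMap hB hden', isOpen_image_projMap hP hO hdenΩ,
    convex_image_projMap hP hC hdenΩ⟩,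
    fun d₂ hd₂ x hx y hy => hilbertDist_projMap_eq hP hO hC hden' hd₁ hd₂ hx hy⟩

/-- a projective transformation whose denominator does not vanish on the
closure of `Ω` maps `Ω` onto a bounded open convex domain and is an isometry for the
Hilbert distances. -/
theorem projective_map_is_hilbert_isometry {n : ℕ}
    (Ω : Set (EuclideanSpace ℝ (Fin n)))
    (hne : Ω.Nonempty) (hO : IsOpen Ω) (hB : Bornology.IsBounded Ω) (hC : Convex ℝ Ω)
    (d₁ : EuclideanSpace ℝ (Fin n) → EuclideanSpace ℝ (Fin n) → ℝ)
    (hd₁ : IsHilbertDist Ω d₁)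
    (A : Matrix (Fin n) (Fin n) ℝ) (b c : EuclideanSpace ℝ (Fin n)) (δ : ℝ)
    (hdet : (projMat A b c δ).det ≠ 0)
    (hden : ∀ x ∈ closure Ω, (∑ i, c i * x i) + δ ≠ 0) :
    (Bornology.IsBounded (fracLin A b c δ '' Ω) ∧ IsOpen (fracLin A b c δ '' Ω) ∧
      Convex ℝ (fracLin A b c δ '' Ω)) ∧
    ∀ d₂ : EuclideanSpace ℝ (Fin n) → EuclideanSpace ℝ (Fin n) → ℝ,
      IsHilbertDist (fracLin A b c δ '' Ω) d₂ →
      ∀ x ∈ Ω, ∀ y ∈ Ω, d₂ (fracLin A b c δ x) (fracLin A b c δ y) = d₁ x y :=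
  projective_map_is_hilbert_isometry_general Ω hO hB hC d₁ hd₁ A b c δ hdet hden
end
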